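/- arXiv:1409.2344 — 2 statements merged into one kernel-verified Lean document; each statement's English description precedes it below -/
import Mathlib

section
/- Let κ: ℝ^d × ℝ^d → ℝ be a kernel that is bounded in absolute value by B and satisfies |κ(x,y) − κ(x',y')| ≤ C · max{‖x − x'‖, ‖y − y'‖} for all arguments, for constants B, C. Let X̃, X' be n×d matrices (n ≥ 2) and Ỹ, Y' be m×d matrices (m ≥ 2), and let S_X ⊆ {1,…,n} and S_Y ⊆ {1,…,m}. Then | U_{n,m}(X̃, Ỹ) − U_{n,m}(X', Y') | ≤ 4C ( max_{i ∈ S_X} ‖X̃_i − X'_i‖ + max_{k ∈ S_Y} ‖Ỹ_k − Y'_k‖ ) + 8B ( (n − |S_X|)/n + (m − |S_Y|)/m ), where X̃_i, X'_i denote the i-th rows and Ỹ_k, Y'_k the k-th rows (with the convention that a maximum over an empty set is 0). -/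
open MeasureTheory ProbabilityTheory Matrix Filter Topology

noncomputable section

/-- Euclidean (ℓ²) norm of a vector in `Fin k → ℝ`. -/
def l2norm {k : ℕ} (x : Fin k → ℝ) : ℝ := Real.sqrt (∑ i, x i ^ 2)

/-- `2 → ∞` norm of a matrix: the maximum Euclidean norm of its rows. -/
def norm2inf {n d : ℕ} (M : Matrix (Fin n) (Fin d) ℝ) : ℝ := ⨆ i, l2norm (M i)

/-- Frobenius norm of a matrix. -/
def frobNorm {n m : ℕ} (M : Matrix (Fin n) (Fin m) ℝ) : ℝ :=
  Real.sqrt (∑ i, ∑ j, M i j ^ 2)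

/-- The two-sample `U`-statistic associated with a kernel `κ`:
`U_{n,m}(X,Y) = (n(n−1))⁻¹ Σ_{i≠j} κ(X_i,X_j) − 2(mn)⁻¹ Σ_i Σ_k κ(X_i,Y_k)
  + (m(m−1))⁻¹ Σ_{k≠l} κ(Y_k,Y_l)`. -/
def Ustat {d n m : ℕ} (κ : (Fin d → ℝ) → (Fin d → ℝ) → ℝ)
    (X : Matrix (Fin n) (Fin d) ℝ) (Y : Matrix (Fin m) (Fin d) ℝ) : ℝ :=
  ((n : ℝ) * ((n : ℝ) - 1))⁻¹ * ∑ i, ∑ j ∈ Finset.univ.erase i, κ (X i) (X j)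
    - 2 * ((m : ℝ) * (n : ℝ))⁻¹ * ∑ i, ∑ k, κ (X i) (Y k)
    + ((m : ℝ) * ((m : ℝ) - 1))⁻¹ * ∑ k, ∑ l ∈ Finset.univ.erase k, κ (Y k) (Y l)

/-- The two-sample `V`-statistic associated with a kernel `κ`. -/
def Vstat {d n m : ℕ} (κ : (Fin d → ℝ) → (Fin d → ℝ) → ℝ)
    (X : Matrix (Fin n) (Fin d) ℝ) (Y : Matrix (Fin m) (Fin d) ℝ) : ℝ :=
  (((n : ℝ)) ^ 2)⁻¹ * ∑ i, ∑ j, κ (X i) (X j)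
    - 2 * ((m : ℝ) * (n : ℝ))⁻¹ * ∑ i, ∑ k, κ (X i) (Y k)
    + (((m : ℝ)) ^ 2)⁻¹ * ∑ k, ∑ l, κ (Y k) (Y l)

/-- A kernel is radial if `κ(x,y)` depends only on `‖x − y‖`. -/
def IsRadial {d : ℕ} (κ : (Fin d → ℝ) → (Fin d → ℝ) → ℝ) : Prop :=
  ∃ φ : ℝ → ℝ, ∀ x y, κ x y = φ (l2norm (x - y))

/-- A `d × d` real matrix is orthogonal. -/
def Orth {d : ℕ} (W : Matrix (Fin d) (Fin d) ℝ) : Prop := Wᵀ * W = 1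

/-- The second moment matrix `E[X₁ X₁ᵀ]` of a distribution `F` on `ℝ^d`. -/
def secondMoment {d : ℕ} (F : Measure (Fin d → ℝ)) : Matrix (Fin d) (Fin d) ℝ :=
  Matrix.of fun i j => ∫ x, x i * x j ∂F

/-- Assumption 1: the second moment matrix `E[X₁X₁ᵀ]` has rank `d` with `d` distinct
(nonzero, hence positive) eigenvalues. -/
def Assumption1 {d : ℕ} (F : Measure (Fin d → ℝ)) : Prop :=
  ∃ (W : Matrix (Fin d) (Fin d) ℝ) (lam : Fin d → ℝ),
    Orth W ∧ (∀ i, 0 < lam i) ∧ Function.Injective lam ∧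
      secondMoment F = W * Matrix.diagonal lam * Wᵀ

/-- `W` is the orthogonal matrix of eigenvectors in an eigendecomposition
`M = W S Wᵀ` with the eigenvalues sorted in decreasing order. -/
def IsEigenmatrix {d : ℕ} (M W : Matrix (Fin d) (Fin d) ℝ) : Prop :=
  Orth W ∧ ∃ lam : Fin d → ℝ, Antitone lam ∧ M = W * Matrix.diagonal lam * Wᵀ

/-- `UA` (n×d, orthonormal columns) and `SA` (d×d diagonal) are the matrices of the top `d`
eigenvectors/eigenvalues of `|A| = (AᵀA)^{1/2}` for a symmetric matrix `A`:
if `A = Σ λ_i u_i u_iᵀ` is an eigendecomposition of `A`, then `|A| = Σ |λ_i| u_i u_iᵀ`,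
and we select the `d` eigenvalues of largest absolute value, in decreasing order. -/
def IsSpectralTopd {n d : ℕ} (A : Matrix (Fin n) (Fin n) ℝ)
    (UA : Matrix (Fin n) (Fin d) ℝ) (SA : Matrix (Fin d) (Fin d) ℝ) : Prop :=
  ∃ (lam : Fin n → ℝ) (u : Fin n → (Fin n → ℝ)) (e : Fin d → Fin n),
    (∀ i j, u i ⬝ᵥ u j = if i = j then (1 : ℝ) else 0) ∧
    (∀ v w, A v w = ∑ i, lam i * u i v * u i w) ∧
    Function.Injective e ∧
    (∀ (i : Fin d) (j : Fin n), j ∉ Set.range e → |lam j| ≤ |lam (e i)|) ∧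
    (∀ i j : Fin d, i ≤ j → |lam (e j)| ≤ |lam (e i)|) ∧
    SA = Matrix.diagonal (fun i => |lam (e i)|) ∧
    (∀ v i, UA v i = u (e i) v)

/-- `Xh` is the adjacency spectral embedding of `A` into `ℝ^d`, i.e. `Xh = U_A S_A^{1/2}`. -/
def IsASE {n d : ℕ} (A : Matrix (Fin n) (Fin n) ℝ)
    (Xh : Matrix (Fin n) (Fin d) ℝ) : Prop :=
  ∃ UA SA, IsSpectralTopd A UA SA ∧ ∀ v i, Xh v i = UA v i * Real.sqrt (SA i i)

/-- Entrywise square root of a diagonal matrix (`S^{1/2}`). -/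
def sqrtDiag {d : ℕ} (S : Matrix (Fin d) (Fin d) ℝ) : Matrix (Fin d) (Fin d) ℝ :=
  Matrix.diagonal fun i => Real.sqrt (S i i)

/-- Entrywise inverse square root of a diagonal matrix (`S^{-1/2}`). -/
def invSqrtDiag {d : ℕ} (S : Matrix (Fin d) (Fin d) ℝ) : Matrix (Fin d) (Fin d) ℝ :=
  Matrix.diagonal fun i => (Real.sqrt (S i i))⁻¹

/-- `Ω` is a compact subset of `ℝ^d` such that all pairwise inner products of elements
of `Ω` lie in `[0,1]`. -/
def GoodOmega {d : ℕ} (Ω : Set (Fin d → ℝ)) : Prop :=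
  IsCompact Ω ∧ ∀ x ∈ Ω, ∀ y ∈ Ω, x ⬝ᵥ y ∈ Set.Icc (0 : ℝ) 1

instance matrixMeasurableSpace {m n α : Type*} [MeasurableSpace α] :
    MeasurableSpace (Matrix m n α) :=
  inferInstanceAs (MeasurableSpace (m → n → α))

/-- `(X, A) ~ RDPG(α^{1/2} F)` on `n` vertices: the rows of `X` are i.i.d. with
distribution `F`; `A` is symmetric, `{0,1}`-valued with zero diagonal; and conditionally on
`X` the above-diagonal entries are independent Bernoulli with
`P(A_ij = 1 | X) = α ⟨X_i, X_j⟩` (encoded through conditional expectations of all finite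
products of above-diagonal entries).  Take `α = 1` for the non-sparse model. -/
structure IsRDPG {Θ : Type*} [MeasurableSpace Θ] (μ : Measure Θ) {d n : ℕ}
    (F : Measure (Fin d → ℝ)) (α : ℝ)
    (X : Θ → Fin n → (Fin d → ℝ)) (A : Θ → Matrix (Fin n) (Fin n) ℝ) : Prop where
  measX : ∀ i, Measurable fun θ => X θ i
  lawX : ∀ i, μ.map (fun θ => X θ i) = F
  indepX : iIndepFun (fun i θ => X θ i) μ
  measA : Measurable A
  symmA : ∀ θ, (A θ)ᵀ = A θ
  valA : ∀ θ i j, A θ i j = 0 ∨ A θ i j = 1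
  diagA : ∀ θ i, A θ i i = 0
  condA : ∀ S : Finset (Fin n × Fin n), (∀ p ∈ S, p.1 < p.2) →
      μ[(fun θ => ∏ p ∈ S, A θ p.1 p.2) | MeasurableSpace.comap X inferInstance]
        =ᵐ[μ] fun θ => ∏ p ∈ S, α * (X θ p.1 ⬝ᵥ X θ p.2)

/-- A sequence of random dot product graphs `(X_n, A_n) ~ RDPG(α_n^{1/2} F)` defined on a common
probability space, where `X_n` consists of the first `n` terms of an i.i.d. `F` sequence `ξ` and,
conditionally on the latent positions, the above-diagonal entries of `A_n` are independent
Bernoulli with success probabilities `α_n ⟨ξ_i, ξ_j⟩`.  Take `α = 1` for the non-sparse model. -/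
structure IsRDPGSeq {Θ : Type*} [MeasurableSpace Θ] (μ : Measure Θ) {d : ℕ}
    (F : Measure (Fin d → ℝ)) (α : ℕ → ℝ)
    (ξ : ℕ → Θ → (Fin d → ℝ)) (A : (n : ℕ) → Θ → Matrix (Fin n) (Fin n) ℝ) : Prop where
  measX : ∀ i, Measurable (ξ i)
  lawX : ∀ i, μ.map (ξ i) = F
  indepX : iIndepFun ξ μ
  measA : ∀ n, Measurable (A n)
  symmA : ∀ n θ, (A n θ)ᵀ = A n θ
  valA : ∀ n θ i j, A n θ i j = 0 ∨ A n θ i j = 1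
  diagA : ∀ n θ i, A n θ i i = 0
  condA : ∀ n, ∀ S : Finset (Fin n × Fin n), (∀ p ∈ S, p.1 < p.2) →
      μ[(fun θ => ∏ p ∈ S, A n θ p.1 p.2) |
          MeasurableSpace.comap (fun θ (i : Fin n) => ξ i θ) inferInstance]
        =ᵐ[μ] fun θ => ∏ p ∈ S, α n * (ξ (p.1 : ℕ) θ ⬝ᵥ ξ (p.2 : ℕ) θ)

/-- The `n × d` matrix whose rows are the first `n` latent positions `ξ_0(θ),…,ξ_{n−1}(θ)`. -/
def sampleMatrix {Θ : Type*} {d : ℕ} (ξ : ℕ → Θ → (Fin d → ℝ)) (n : ℕ) (θ : Θ) :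
    Matrix (Fin n) (Fin d) ℝ :=
  Matrix.of fun i : Fin n => ξ (i : ℕ) θ

/-- `F ⊩ G` : equality up to orthogonal transformation, i.e. `F = G ∘ U` for some orthogonal
`U`, where `G ∘ U` is the distribution of `Uᵀ Y` for `Y ~ G`. -/
def EqUpToOrth {d : ℕ} (F G : Measure (Fin d → ℝ)) : Prop :=
  ∃ U : Matrix (Fin d) (Fin d) ℝ, Orth U ∧ F = G.map fun y => Uᵀ.mulVec y

/- A kernel difference over a pair of rows that are both controlled is at most `C` times the
larger row perturbation, and any other difference is at most `2B`. Each of the three averages in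
`Ustat` therefore moves by at most `C ε` plus `2B` times the proportion of pairs containing an
uncontrolled row, which is at most twice the proportion of uncontrolled rows. This gives the bound
with `3C`; the Lipschitz condition forces `C ≥ 0` once `d ≥ 1`, and for `d = 0` all rows agree. -/

section KernelDifferences

variable {E : Type*} {κ δ : E → E → ℝ} {B C : ℝ}

def offIndicator {ι : Type*} [DecidableEq ι] (S : Finset ι) (i : ι) : ℝ := if i ∈ S then 0 else 1

lemma sum_offIndicator {ι : Type*} [Fintype ι] [DecidableEq ι] (S : Finset ι) :
    ∑ i, offIndicator S i = (Fintype.card ι : ℝ) - S.card := by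
  simp [offIndicator, Finset.sum_ite, Finset.filter_notMem_eq_sdiff, Finset.card_univ_sdiff,
    Nat.cast_sub S.card_le_univ]

lemma nonneg_of_abs_sub_le_mul_max
    (hC : ∀ x x' y y', |κ x y - κ x' y'| ≤ C * max (δ x x') (δ y y')) {x x' : E} (y : E)
    (hxx' : 0 < δ x x') : 0 ≤ C := by
  have hmax : 0 < max (δ x x') (δ y y) := lt_max_of_lt_left hxx'
  exact le_of_mul_le_mul_right (by simpa using (abs_nonneg _).trans (hC x x' y y)) hmax

lemma abs_sub_le_offIndicator {ι ι' : Type*} [DecidableEq ι] [DecidableEq ι']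
    (hB : ∀ x y, |κ x y| ≤ B)
    (hC : ∀ x x' y y', |κ x y - κ x' y'| ≤ C * max (δ x x') (δ y y')) (hC0 : 0 ≤ C)
    {ε : ℝ} (hε : 0 ≤ ε) {X X' : ι → E} {Y Y' : ι' → E} {S : Finset ι} {T : Finset ι'}
    (hX : ∀ i ∈ S, δ (X i) (X' i) ≤ ε) (hY : ∀ j ∈ T, δ (Y j) (Y' j) ≤ ε) (i : ι) (j : ι') :
    |κ (X i) (Y j) - κ (X' i) (Y' j)|
      ≤ C * ε + 2 * B * offIndicator S i + 2 * B * offIndicator T j := by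
  have hB0 : 0 ≤ B := (abs_nonneg _).trans (hB (X i) (Y j))
  have h2B : |κ (X i) (Y j) - κ (X' i) (Y' j)| ≤ 2 * B :=
    (abs_sub _ _).trans (by linarith [hB (X i) (Y j), hB (X' i) (Y' j)])
  have hCε : 0 ≤ C * ε := mul_nonneg hC0 hε
  unfold offIndicator
  by_cases hi : i ∈ S <;> by_cases hj : j ∈ T <;> simp only [hi, hj, if_true, if_false]
  · calc |κ (X i) (Y j) - κ (X' i) (Y' j)| ≤ C * max (δ (X i) (X' i)) (δ (Y j) (Y' j)) :=
          hC _ _ _ _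
      _ ≤ C * ε := by gcongr; exact max_le (hX i hi) (hY j hj)
      _ = _ := by ring
  all_goals linarith

end KernelDifferences

section Averages

variable {ι ι' : Type*} [Fintype ι] [Fintype ι']

lemma abs_offDiag_avg_le [DecidableEq ι] (hι : 2 ≤ Fintype.card ι) {f : ι → ι → ℝ} {c : ℝ}
    {g : ι → ℝ} (hf : ∀ i j, |f i j| ≤ c + g i + g j) :
    |((Fintype.card ι : ℝ) * ((Fintype.card ι : ℝ) - 1))⁻¹
        * ∑ i, ∑ j ∈ Finset.univ.erase i, f i j|
      ≤ c + 2 * (∑ i, g i) / Fintype.card ι := by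
  set N : ℝ := (Fintype.card ι : ℝ)
  have hN : 2 ≤ N := Nat.ofNat_le_cast.2 hι
  have hpos : 0 < N * (N - 1) := by nlinarith
  have hsum : ∑ i, ∑ j ∈ Finset.univ.erase i, (c + g i + g j)
      = N * (N - 1) * c + 2 * (N - 1) * ∑ i, g i := by
    simp only [Finset.sum_erase_eq_sub (Finset.mem_univ _), Finset.sum_add_distrib,
      Finset.sum_sub_distrib, Finset.sum_const, Finset.card_univ, nsmul_eq_mul, ← Finset.mul_sum]
    ring
  rw [abs_mul, abs_of_pos (inv_pos.2 hpos), inv_mul_le_iff₀ hpos]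
  calc |∑ i, ∑ j ∈ Finset.univ.erase i, f i j|
      ≤ ∑ i, ∑ j ∈ Finset.univ.erase i, |f i j| :=
        (Finset.abs_sum_le_sum_abs _ _).trans
          (Finset.sum_le_sum fun i _ => Finset.abs_sum_le_sum_abs _ _)
    _ ≤ ∑ i, ∑ j ∈ Finset.univ.erase i, (c + g i + g j) := by gcongr with i _ j _; exact hf i j
    _ = N * (N - 1) * (c + 2 * (∑ i, g i) / N) := by rw [hsum]; field_simp

lemma abs_avg_le (hι : 0 < Fintype.card ι) (hι' : 0 < Fintype.card ι') {f : ι → ι' → ℝ}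
    {c : ℝ} {g : ι → ℝ} {h : ι' → ℝ} (hf : ∀ i j, |f i j| ≤ c + g i + h j) :
    |((Fintype.card ι' : ℝ) * (Fintype.card ι : ℝ))⁻¹ * ∑ i, ∑ j, f i j|
      ≤ c + (∑ i, g i) / Fintype.card ι + (∑ j, h j) / Fintype.card ι' := by
  set N : ℝ := (Fintype.card ι : ℝ)
  set N' : ℝ := (Fintype.card ι' : ℝ)
  have hN : 0 < N := Nat.cast_pos.2 hι
  have hN' : 0 < N' := Nat.cast_pos.2 hι'
  have hpos : 0 < N' * N := mul_pos hN' hN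
  have hsum : ∑ i, ∑ j, (c + g i + h j) = N * N' * c + N' * ∑ i, g i + N * ∑ j, h j := by
    simp only [Finset.sum_add_distrib, Finset.sum_const, Finset.card_univ, nsmul_eq_mul,
      ← Finset.mul_sum]
    ring
  rw [abs_mul, abs_of_pos (inv_pos.2 hpos), inv_mul_le_iff₀ hpos]
  calc |∑ i, ∑ j, f i j| ≤ ∑ i, ∑ j, |f i j| :=
        (Finset.abs_sum_le_sum_abs _ _).trans
          (Finset.sum_le_sum fun i _ => Finset.abs_sum_le_sum_abs _ _)
    _ ≤ ∑ i, ∑ j, (c + g i + h j) := by gcongr with i _ j _; exact hf i j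
    _ = N' * N * (c + (∑ i, g i) / N + (∑ j, h j) / N') := by rw [hsum]; field_simp

end Averages

lemma le_biSup_of_finite {ι : Type*} [Finite ι] (f : ι → ℝ) {S : Finset ι} {i : ι} (hi : i ∈ S) :
    f i ≤ ⨆ j ∈ S, f j :=
  le_ciSup_of_le (Set.finite_range _).bddAbove i
    (le_ciSup (f := fun _ : i ∈ S => f i) (Set.finite_range _).bddAbove hi)


theorem abs_Ustat_sub_le {d n m : ℕ} (hn : 2 ≤ n) (hm : 2 ≤ m)
    {κ : (Fin d → ℝ) → (Fin d → ℝ) → ℝ} {B C : ℝ} (hB : ∀ x y, |κ x y| ≤ B)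
    (hC : ∀ x x' y y', |κ x y - κ x' y'| ≤ C * max (l2norm (x - x')) (l2norm (y - y')))
    (hC0 : 0 ≤ C) {Xt X' : Matrix (Fin n) (Fin d) ℝ} {Yt Y' : Matrix (Fin m) (Fin d) ℝ}
    {SX : Finset (Fin n)} {SY : Finset (Fin m)} {εX εY : ℝ} (hεX : 0 ≤ εX) (hεY : 0 ≤ εY)
    (hX : ∀ i ∈ SX, l2norm (Xt i - X' i) ≤ εX) (hY : ∀ k ∈ SY, l2norm (Yt k - Y' k) ≤ εY) :
    |Ustat κ Xt Yt - Ustat κ X' Y'|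
      ≤ 3 * C * (εX + εY) + 8 * B * (((n : ℝ) - SX.card) / n + ((m : ℝ) - SY.card) / m) := by
  set AX := ((n : ℝ) * ((n : ℝ) - 1))⁻¹
    * ∑ i, ∑ j ∈ Finset.univ.erase i, (κ (Xt i) (Xt j) - κ (X' i) (X' j))
  set AXY := ((m : ℝ) * (n : ℝ))⁻¹ * ∑ i, ∑ k, (κ (Xt i) (Yt k) - κ (X' i) (Y' k))
  set AY := ((m : ℝ) * ((m : ℝ) - 1))⁻¹
    * ∑ k, ∑ l ∈ Finset.univ.erase k, (κ (Yt k) (Yt l) - κ (Y' k) (Y' l))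
  have hdecomp : Ustat κ Xt Yt - Ustat κ X' Y' = AX - 2 * AXY + AY := by
    simp only [AX, AXY, AY, Ustat, Finset.sum_sub_distrib]
    ring
  have hAX : |AX| ≤ C * εX + 4 * B * (((n : ℝ) - SX.card) / n) := by
    have h := abs_offDiag_avg_le (by simpa using hn) (abs_sub_le_offIndicator hB hC hC0 hεX hX hX)
    simp only [Fintype.card_fin, ← Finset.mul_sum, sum_offIndicator] at h
    exact h.trans_eq (by ring)
  have hAY : |AY| ≤ C * εY + 4 * B * (((m : ℝ) - SY.card) / m) := by
    have h := abs_offDiag_avg_le (by simpa using hm) (abs_sub_le_offIndicator hB hC hC0 hεY hY hY)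
    simp only [Fintype.card_fin, ← Finset.mul_sum, sum_offIndicator] at h
    exact h.trans_eq (by ring)
  have hAXY : |AXY| ≤ C * (εX + εY) + 2 * B * (((n : ℝ) - SX.card) / n)
      + 2 * B * (((m : ℝ) - SY.card) / m) := by
    have h := abs_avg_le (by rw [Fintype.card_fin]; omega) (by rw [Fintype.card_fin]; omega)
      (abs_sub_le_offIndicator hB hC hC0 (add_nonneg hεX hεY)
        (fun i hi => (hX i hi).trans (le_add_of_nonneg_right hεY))
        (fun k hk => (hY k hk).trans (le_add_of_nonneg_left hεX)))
    simp only [Fintype.card_fin, ← Finset.mul_sum, sum_offIndicator] at h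
    exact h.trans_eq (by ring)
  rw [hdecomp, abs_le]
  obtain ⟨hAX₁, hAX₂⟩ := abs_le.1 hAX
  obtain ⟨hAY₁, hAY₂⟩ := abs_le.1 hAY
  obtain ⟨hAXY₁, hAXY₂⟩ := abs_le.1 hAXY
  constructor <;> linarith

/-- Perturbation bound for the `U`-statistic when only the rows in the
index sets `S_X`, `S_Y` are controlled: the remaining rows contribute through the bound
`B` on the kernel. -/
theorem stmt_9 {d n m : ℕ} (hn : 2 ≤ n) (hm : 2 ≤ m)
    (κ : (Fin d → ℝ) → (Fin d → ℝ) → ℝ) (B C : ℝ)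
    (hB : ∀ x y, |κ x y| ≤ B)
    (hC : ∀ x x' y y', |κ x y - κ x' y'| ≤ C * max (l2norm (x - x')) (l2norm (y - y')))
    (Xt X' : Matrix (Fin n) (Fin d) ℝ) (Yt Y' : Matrix (Fin m) (Fin d) ℝ)
    (SX : Finset (Fin n)) (SY : Finset (Fin m)) :
    |Ustat κ Xt Yt - Ustat κ X' Y'| ≤
      4 * C * ((⨆ i ∈ SX, l2norm (Xt i - X' i)) + ⨆ k ∈ SY, l2norm (Yt k - Y' k))
        + 8 * B * (((n : ℝ) - SX.card) / n + ((m : ℝ) - SY.card) / m) := by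
  obtain rfl | hd := eq_or_ne d 0
  · have hl2 : ∀ v : Fin 0 → ℝ, l2norm v = 0 := by simp [l2norm]
    have hB0 : 0 ≤ B := (abs_nonneg _).trans (hB 0 0)
    have hSX : (SX.card : ℝ) ≤ n := by exact_mod_cast SX.card_le_univ.trans_eq (Fintype.card_fin n)
    have hSY : (SY.card : ℝ) ≤ m := by exact_mod_cast SY.card_le_univ.trans_eq (Fintype.card_fin m)
    rw [Subsingleton.elim Xt X', Subsingleton.elim Yt Y', sub_self, abs_zero]
    simp only [hl2, Real.iSup_const_zero, add_zero, mul_zero, zero_add]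
    exact mul_nonneg (by positivity) (add_nonneg (div_nonneg (sub_nonneg.2 hSX) n.cast_nonneg)
      (div_nonneg (sub_nonneg.2 hSY) m.cast_nonneg))
  have hC0 : 0 ≤ C := nonneg_of_abs_sub_le_mul_max hC (x := fun _ => 1) (x' := 0) 0
    (by simpa [l2norm] using Nat.pos_of_ne_zero hd)
  have hεX : 0 ≤ ⨆ i ∈ SX, l2norm (Xt i - X' i) :=
    Real.iSup_nonneg fun _ => Real.iSup_nonneg fun _ => Real.sqrt_nonneg _
  have hεY : 0 ≤ ⨆ k ∈ SY, l2norm (Yt k - Y' k) :=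
    Real.iSup_nonneg fun _ => Real.iSup_nonneg fun _ => Real.sqrt_nonneg _
  refine (abs_Ustat_sub_le hn hm hB hC hC0 hεX hεY
    (fun _ => le_biSup_of_finite fun i => l2norm (Xt i - X' i))
    (fun _ => le_biSup_of_finite fun k => l2norm (Yt k - Y' k))).trans ?_
  gcongr
  linarith [mul_nonneg hC0 (add_nonneg hεX hεY)]

end
end

section
/- Let Ω ⊂ ℝ^d be compact and let κ be a twice continuously differentiable radial kernel. Then there exists a constant L (depending only on κ and Ω) such that for all n, m ≥ 2, all n×d matrices X, X̂ and all m×d matrices Y, Ŷ with rows in Ω, and all d×d orthogonal matrices W₁, W₂, the remainder terms r₁ = ((m+n)/(n(n−1))) Σ_{i=1}^n (κ(X_i,X_i) − κ(X̂_i,X̂_i)) + ((m+n)/(m(m−1))) Σ_{k=1}^m (κ(Y_k,Y_k) − κ(Ŷ_k,Ŷ_k)) and r₂ = ((m+n)/(n²(n−1))) Σ_{i,j} (κ(X_i,X_j) − κ(X̂_i,X̂_j)) + ((m+n)/(m²(m−1))) Σ_{k,l} (κ(Y_k,Y_l) − κ(Ŷ_k,Ŷ_l)) both satisfy the bound |r|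 ≤ L (m+n) ( ‖X̂ − XW₁‖_{2→∞}/(n−1) + ‖Ŷ − YW₂‖_{2→∞}/(m−1) ). -/
/-!
A radial kernel is constant on the diagonal, so `r₁ = 0`, and it is invariant under a common
orthogonal change of both arguments, so `κ(X_i, X_j) = κ((XW)_i, (XW)_j)`. Being `C¹`, `κ` is
Lipschitz on `B × B` for a ball `B` containing `Ω` and all its rotations; hence each summand of
`r₂` is at most `K ‖X̂ − XW‖_{2→∞}`, and the `n²` summands are compensated by the prefactor.
-/

open MeasureTheory ProbabilityTheory Matrix Filter Topology

noncomputable section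

lemma norm_le_l2norm {k : ℕ} (x : Fin k → ℝ) : ‖x‖ ≤ l2norm x := by
  refine (pi_norm_le_iff_of_nonneg (Real.sqrt_nonneg _)).2 fun i => ?_
  rw [Real.norm_eq_abs, ← Real.sqrt_sq_eq_abs]
  exact Real.sqrt_le_sqrt (Finset.single_le_sum (fun j _ => sq_nonneg (x j)) (Finset.mem_univ i))

lemma l2norm_vecMul_of_orth {k : ℕ} {W : Matrix (Fin k) (Fin k) ℝ} (hW : Orth W)
    (v : Fin k → ℝ) : l2norm (v ᵥ* W) = l2norm v := by
  have hWWt : W * Wᵀ = 1 := mul_eq_one_comm.mp hW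
  have hdot : v ᵥ* W ⬝ᵥ v ᵥ* W = v ⬝ᵥ v := by
    rw [← dotProduct_mulVec, ← mulVec_transpose, mulVec_mulVec, hWWt, one_mulVec]
  simpa only [l2norm, dotProduct, sq] using congrArg Real.sqrt hdot

lemma l2norm_le_norm2inf {n k : ℕ} (M : Matrix (Fin n) (Fin k) ℝ) (i : Fin n) :
    l2norm (M i) ≤ norm2inf M :=
  le_ciSup (f := fun i => l2norm (M i)) (Set.finite_range _).bddAbove i

lemma norm2inf_nonneg {n k : ℕ} (M : Matrix (Fin n) (Fin k) ℝ) : 0 ≤ norm2inf M :=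
  Real.iSup_nonneg fun _ => Real.sqrt_nonneg _

lemma dist_row_le_norm2inf {n k : ℕ} (A B : Matrix (Fin n) (Fin k) ℝ) (i : Fin n) :
    dist (A i) (B i) ≤ norm2inf (A - B) :=
  (norm_le_l2norm (A i - B i)).trans (l2norm_le_norm2inf (A - B) i)

lemma continuous_l2norm {k : ℕ} : Continuous (l2norm : (Fin k → ℝ) → ℝ) := by
  unfold l2norm
  fun_prop

namespace IsRadial

variable {d : ℕ} {κ : (Fin d → ℝ) → (Fin d → ℝ) → ℝ}

lemma apply_self_eq (hκ : IsRadial κ) (x y : Fin d → ℝ) : κ x x = κ y y := by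
  obtain ⟨φ, hφ⟩ := hκ
  rw [hφ, hφ, sub_self, sub_self]

lemma apply_vecMul_of_orth (hκ : IsRadial κ) {W : Matrix (Fin d) (Fin d) ℝ} (hW : Orth W)
    (u v : Fin d → ℝ) : κ (u ᵥ* W) (v ᵥ* W) = κ u v := by
  obtain ⟨φ, hφ⟩ := hκ
  rw [hφ, hφ, ← sub_vecMul, l2norm_vecMul_of_orth hW]

end IsRadial

lemma exists_abs_sub_le_norm2inf {d : ℕ} {Ω : Set (Fin d → ℝ)} (hΩ : IsCompact Ω)
    {κ : (Fin d → ℝ) → (Fin d → ℝ) → ℝ}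
    (hκ : LocallyLipschitz fun p : (Fin d → ℝ) × (Fin d → ℝ) => κ p.1 p.2) (hrad : IsRadial κ) :
    ∃ C : ℝ, 0 ≤ C ∧ ∀ (n : ℕ) (X Xh : Matrix (Fin n) (Fin d) ℝ) (W : Matrix (Fin d) (Fin d) ℝ),
      (∀ i, X i ∈ Ω) → (∀ i, Xh i ∈ Ω) → Orth W →
        ∀ i j, |κ (X i) (X j) - κ (Xh i) (Xh j)| ≤ C * norm2inf (Xh - X * W) := by
  obtain ⟨R, hR⟩ := (hΩ.image continuous_l2norm).bddAbove
  set B := Metric.closedBall (0 : Fin d → ℝ) R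
  have hB : ∀ x, l2norm x ≤ R → x ∈ B := fun x hx =>
    mem_closedBall_zero_iff.2 ((norm_le_l2norm x).trans hx)
  have hΩB : ∀ x ∈ Ω, x ∈ B := fun x hx => hB x (hR ⟨x, hx, rfl⟩)
  obtain ⟨K, hK⟩ := hκ.locallyLipschitzOn.exists_lipschitzOnWith_of_compact
    ((isCompact_closedBall 0 R).prod (isCompact_closedBall 0 R))
  refine ⟨K, K.coe_nonneg, fun n X Xh W hX hXh hW i j => ?_⟩
  have hXW : ∀ i, (X * W) i ∈ B := fun i =>
    hB _ ((l2norm_vecMul_of_orth hW (X i)).trans_le (hR ⟨X i, hX i, rfl⟩))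
  rw [← hrad.apply_vecMul_of_orth hW, abs_sub_comm, ← Real.dist_eq]
  calc dist (κ (Xh i) (Xh j)) (κ ((X * W) i) ((X * W) j))
      ≤ K * dist (Xh i, Xh j) ((X * W) i, (X * W) j) :=
        hK.dist_le_mul _ (Set.mk_mem_prod (hΩB _ (hXh i)) (hΩB _ (hXh j)))
          _ (Set.mk_mem_prod (hXW i) (hXW j))
    _ ≤ K * norm2inf (Xh - X * W) := by
        rw [Prod.dist_eq]
        exact mul_le_mul_of_nonneg_left (max_le (dist_row_le_norm2inf Xh (X * W) i)
          (dist_row_le_norm2inf Xh (X * W) j)) K.coe_nonneg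

lemma abs_sum_sum_le {ι : Type*} [Fintype ι] {f : ι → ι → ℝ} {c : ℝ} (h : ∀ i j, |f i j| ≤ c) :
    |∑ i, ∑ j, f i j| ≤ Fintype.card ι ^ 2 * c :=
  calc |∑ i, ∑ j, f i j| ≤ ∑ i, ∑ j, |f i j| :=
        (Finset.abs_sum_le_sum_abs _ _).trans
          (Finset.sum_le_sum fun i _ => Finset.abs_sum_le_sum_abs _ _)
    _ ≤ ∑ _i : ι, ∑ _j : ι, c := Finset.sum_le_sum fun i _ => Finset.sum_le_sum fun j _ => h i j
    _ = Fintype.card ι ^ 2 * c := by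
        simp only [Finset.sum_const, Finset.card_univ, nsmul_eq_mul]
        ring

lemma abs_div_mul_le {a b c S B : ℝ} (ha : 0 ≤ a) (hb : 0 ≤ b) (hc : 0 < c)
    (hS : |S| ≤ c * B) : |a / (c * b) * S| ≤ a * (B / b) :=
  calc |a / (c * b) * S| = a / (c * b) * |S| := by rw [abs_mul, abs_of_nonneg (by positivity)]
    _ ≤ a / (c * b) * (c * B) := mul_le_mul_of_nonneg_left hS (by positivity)
    _ = a * (B / b) := by field_simp

/-- bound on the remainder terms `r₁`, `r₂` in the proof of Theorem 1 of
Tang et al..  For a twice continuously differentiable radial kernel there is a constant `L`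
(depending only on `κ` and `Ω`) bounding both remainders by
`L(m+n)(‖X̂ − XW₁‖_{2→∞}/(n−1) + ‖Ŷ − YW₂‖_{2→∞}/(m−1))`. -/
theorem stmt_17 {d : ℕ} (Ω : Set (Fin d → ℝ)) (hΩ : IsCompact Ω)
    (κ : (Fin d → ℝ) → (Fin d → ℝ) → ℝ)
    (hκ : ContDiff ℝ 2 fun p : (Fin d → ℝ) × (Fin d → ℝ) => κ p.1 p.2)
    (hrad : IsRadial κ) :
    ∃ L : ℝ, ∀ (n m : ℕ), 2 ≤ n → 2 ≤ m →
      ∀ (X Xh : Matrix (Fin n) (Fin d) ℝ) (Y Yh : Matrix (Fin m) (Fin d) ℝ),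
        (∀ i, X i ∈ Ω) → (∀ i, Xh i ∈ Ω) → (∀ k, Y k ∈ Ω) → (∀ k, Yh k ∈ Ω) →
        ∀ W1 W2 : Matrix (Fin d) (Fin d) ℝ, Orth W1 → Orth W2 →
          |((m : ℝ) + n) / ((n : ℝ) * ((n : ℝ) - 1)) *
              ∑ i, (κ (X i) (X i) - κ (Xh i) (Xh i))
            + ((m : ℝ) + n) / ((m : ℝ) * ((m : ℝ) - 1)) *
              ∑ k, (κ (Y k) (Y k) - κ (Yh k) (Yh k))| ≤
            L * ((m : ℝ) + n) * (norm2inf (Xh - X * W1) / ((n : ℝ) - 1)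
              + norm2inf (Yh - Y * W2) / ((m : ℝ) - 1)) ∧
          |((m : ℝ) + n) / ((n : ℝ) ^ 2 * ((n : ℝ) - 1)) *
              ∑ i, ∑ j, (κ (X i) (X j) - κ (Xh i) (Xh j))
            + ((m : ℝ) + n) / ((m : ℝ) ^ 2 * ((m : ℝ) - 1)) *
              ∑ k, ∑ l, (κ (Y k) (Y l) - κ (Yh k) (Yh l))| ≤
            L * ((m : ℝ) + n) * (norm2inf (Xh - X * W1) / ((n : ℝ) - 1)
              + norm2inf (Yh - Y * W2) / ((m : ℝ) - 1)) := by
  obtain ⟨C, hC, hκC⟩ :=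
    exists_abs_sub_le_norm2inf hΩ (hκ.of_le one_le_two).locallyLipschitz hrad
  refine ⟨C, fun n m hn hm X Xh Y Yh hX hXh hY hYh W1 W2 hW1 hW2 => ?_⟩
  have hn1 : (0 : ℝ) ≤ n - 1 := sub_nonneg.2 (Nat.one_le_cast.2 (by omega))
  have hm1 : (0 : ℝ) ≤ m - 1 := sub_nonneg.2 (Nat.one_le_cast.2 (by omega))
  refine ⟨?_, ?_⟩
  · have hdiag : ∀ {k : ℕ} (Z Zh : Matrix (Fin k) (Fin d) ℝ),
        ∑ i, (κ (Z i) (Z i) - κ (Zh i) (Zh i)) = 0 := fun Z Zh =>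
      Finset.sum_eq_zero fun i _ => sub_eq_zero.2 (hrad.apply_self_eq _ _)
    rw [hdiag, hdiag, mul_zero, mul_zero, add_zero, abs_zero]
    exact mul_nonneg (mul_nonneg hC (by positivity))
      (add_nonneg (div_nonneg (norm2inf_nonneg _) hn1) (div_nonneg (norm2inf_nonneg _) hm1))
  · have hsum : ∀ {k : ℕ} (Z Zh : Matrix (Fin k) (Fin d) ℝ) (W : Matrix (Fin d) (Fin d) ℝ),
        (∀ i, Z i ∈ Ω) → (∀ i, Zh i ∈ Ω) → Orth W →
        |∑ i, ∑ j, (κ (Z i) (Z j) - κ (Zh i) (Zh j))| ≤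
          (k : ℝ) ^ 2 * (C * norm2inf (Zh - Z * W)) :=
      fun Z Zh W hZ hZh hW => by
        simpa only [Fintype.card_fin] using abs_sum_sum_le (hκC _ Z Zh W hZ hZh hW)
    calc _ ≤ _ := abs_add_le _ _
      _ ≤ (m + n) * (C * norm2inf (Xh - X * W1) / (n - 1))
            + (m + n) * (C * norm2inf (Yh - Y * W2) / (m - 1)) :=
          add_le_add
            (abs_div_mul_le (by positivity) hn1 (by positivity) (hsum X Xh W1 hX hXh hW1))
            (abs_div_mul_le (by positivity) hm1 (by positivity) (hsum Y Yh W2 hY hYh hW2))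
      _ = _ := by ring
end
end
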